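/- arXiv:0705.1574 — 7 statements merged into one kernel-verified Lean document; each statement's English description precedes it below -/
import Mathlib

section
/- Let E be a quantum channel with Kraus operators {E_a}, P an orthogonal projection on H, and 𝒜 a *-subalgebra of L(PH) (operators supported on PH). Then P E†(X) P = P X P for all X ∈ 𝒜 (i.e., 𝒜 is conserved by E for states in PH) if and only if [E_a P, X] = 0 for all X ∈ 𝒜 and all a. -/
open Matrix

/-!
For `X = PXP` put `D_a = E_a X - X E_a P`. Expanding `∑ D_a† D_a` and using `∑ E_a† E_a = 1`
together with the conservation of `X`, `X†` and `X† X` (all in `𝒜`) shows that the sum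
vanishes. A vanishing sum of positive semidefinite matrices has vanishing terms, so
`E_a X = X E_a P`, which is `E_a P X = X E_a P` because `PX = X`. Conversely, commutation gives
`P E_a† X E_a P = P E_a† E_a P X`, and summing over `a` yields `PXP`.
-/

namespace IsIdempotentElem

variable {S : Type*} [Semigroup S] {p x : S}

theorem mul_eq_of_mul_mul_eq (hp : IsIdempotentElem p) (hx : p * x * p = x) : p * x = x := by
  conv_lhs => rw [← hx, ← mul_assoc, ← mul_assoc, hp.eq]
  exact hx

theorem mul_eq_of_mul_mul_eq' (hp : IsIdempotentElem p) (hx : p * x * p = x) : x * p = x := by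
  conv_lhs => rw [← hx, mul_assoc, hp.eq]
  exact hx

end IsIdempotentElem

section StarRing

variable {R ι : Type*} [Ring R] [StarRing R] [Fintype ι]

theorem mul_sum_star_mul_mul_eq_of_commute {E : ι → R} (hTP : ∑ a, star (E a) * E a = 1)
    {P X : R} (hP : IsIdempotentElem P) (hX : P * X * P = X) (hcomm : ∀ a, Commute (E a * P) X) :
    P * (∑ a, star (E a) * X * E a) * P = P * X * P := by
  have hterm : ∀ a, P * (star (E a) * X * E a) * P = P * (star (E a) * E a) * P * X := fun a =>
    calc P * (star (E a) * X * E a) * P = P * star (E a) * (X * (E a * P)) := by noncomm_ring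
      _ = P * star (E a) * (E a * P * X) := by rw [(hcomm a).eq]
      _ = P * (star (E a) * E a) * P * X := by noncomm_ring
  calc P * (∑ a, star (E a) * X * E a) * P
      = ∑ a, P * (star (E a) * E a) * P * X := by
        simp only [Finset.mul_sum, Finset.sum_mul, hterm]
    _ = P * X * P := by
        rw [← Finset.sum_mul, ← Finset.sum_mul, ← Finset.mul_sum, hTP, mul_one, hP.eq, hX,
          hP.mul_eq_of_mul_mul_eq hX]

theorem sum_star_mul_self_sub_eq (E : ι → R) {P : R} (hP : star P = P) (X : R) :
    ∑ a, star (E a * X - X * (E a * P)) * (E a * X - X * (E a * P)) =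
      star X * (∑ a, star (E a) * E a) * X - star X * (∑ a, star (E a) * X * E a) * P
        - P * (∑ a, star (E a) * star X * E a) * X
        + P * (∑ a, star (E a) * (star X * X) * E a) * P := by
  simp only [Finset.mul_sum, Finset.sum_mul, ← Finset.sum_sub_distrib, ← Finset.sum_add_distrib,
    star_sub, star_mul, hP]
  refine Finset.sum_congr rfl fun a _ => ?_
  noncomm_ring

end StarRing

open scoped ComplexOrder MatrixOrder in
theorem Matrix.eq_zero_of_sum_conjTranspose_mul_self_eq_zero {n ι 𝕜 : Type*} [Fintype n]
    [RCLike 𝕜] {s : Finset ι} {D : ι → Matrix n n 𝕜} (h : ∑ a ∈ s, (D a)ᴴ * D a = 0) {a : ι}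
    (ha : a ∈ s) : D a = 0 :=
  conjTranspose_mul_self_eq_zero.mp <| (Finset.sum_eq_zero_iff_of_nonneg
    fun b _ => (posSemidef_conjTranspose_mul_self (D b)).nonneg).mp h a ha

theorem Matrix.commute_mul_of_mul_sum_conjTranspose_mul_mul_eq {n ι 𝕜 : Type*} [Fintype n]
    [DecidableEq n] [Fintype ι] [RCLike 𝕜] {E : ι → Matrix n n 𝕜} (hTP : ∑ a, (E a)ᴴ * E a = 1)
    {P X : Matrix n n 𝕜}
    (hP : Pᴴ = P) (hPP : IsIdempotentElem P) (hX : P * X * P = X)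
    (hcons : ∀ Y ∈ ({X, Xᴴ, Xᴴ * X} : Set (Matrix n n 𝕜)),
      P * (∑ a, (E a)ᴴ * Y * E a) * P = P * Y * P)
    (a : ι) : Commute (E a * P) X := by
  have hXs : P * Xᴴ * P = Xᴴ := by
    simpa only [conjTranspose_mul, hP, Matrix.mul_assoc] using congrArg conjTranspose hX
  have hdefect : ∑ b, (E b * X - X * (E b * P))ᴴ * (E b * X - X * (E b * P)) = 0 := by
    have hPX := hPP.mul_eq_of_mul_mul_eq hX
    have hXP := hPP.mul_eq_of_mul_mul_eq' hX
    have hPXs := hPP.mul_eq_of_mul_mul_eq hXs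
    have hXsP := hPP.mul_eq_of_mul_mul_eq' hXs
    have h1 : Xᴴ * (∑ b, (E b)ᴴ * X * E b) * P = Xᴴ * X := calc
      _ = Xᴴ * (P * (∑ b, (E b)ᴴ * X * E b) * P) := by
        rw [← Matrix.mul_assoc, ← Matrix.mul_assoc, hXsP, Matrix.mul_assoc]
      _ = Xᴴ * X := by rw [hcons X (by simp), hX]
    have h2 : P * (∑ b, (E b)ᴴ * Xᴴ * E b) * X = Xᴴ * X := calc
      _ = P * (∑ b, (E b)ᴴ * Xᴴ * E b) * P * X := by rw [Matrix.mul_assoc _ P X, hPX]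
      _ = Xᴴ * X := by rw [hcons Xᴴ (by simp), hXs]
    have h3 : P * (∑ b, (E b)ᴴ * (Xᴴ * X) * E b) * P = Xᴴ * X := by
      rw [hcons (Xᴴ * X) (by simp), ← Matrix.mul_assoc, hPXs, Matrix.mul_assoc, hXP]
    have hexpand := sum_star_mul_self_sub_eq E hP X
    simp only [star_eq_conjTranspose] at hexpand
    rw [hexpand, hTP, Matrix.mul_one, h1, h2, h3]
    abel
  have hEX := sub_eq_zero.mp (eq_zero_of_sum_conjTranspose_mul_self_eq_zero hdefect
    (Finset.mem_univ a))
  rw [Commute, SemiconjBy, Matrix.mul_assoc, hPP.mul_eq_of_mul_mul_eq hX, hEX]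

/-- A *-subalgebra `𝒜` of `L(PH)` (i.e. every `X ∈ 𝒜` satisfies `X = PXP`) is
conserved by the channel `E` for states in `PH`, i.e. `P E†(X) P = PXP` for all
`X ∈ 𝒜`, if and only if `[E_a P, X] = 0` for all `X ∈ 𝒜` and all `a`. -/
theorem conserved_iff_commute {n m : ℕ}
    (E : Fin m → Matrix (Fin n) (Fin n) ℂ)
    (hTP : ∑ a, (E a)ᴴ * E a = 1)
    (P : Matrix (Fin n) (Fin n) ℂ) (hP1 : Pᴴ = P) (hP2 : P * P = P)
    (𝒜 : NonUnitalStarSubalgebra ℂ (Matrix (Fin n) (Fin n) ℂ))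
    (hsupp : ∀ X ∈ 𝒜, P * X * P = X) :
    (∀ X ∈ 𝒜, P * (∑ a, (E a)ᴴ * X * E a) * P = P * X * P) ↔
      (∀ a, ∀ X ∈ 𝒜, Commute (E a * P) X) := by
  constructor
  · intro hcons a X hX
    refine commute_mul_of_mul_sum_conjTranspose_mul_mul_eq hTP hP1 hP2 (hsupp X hX) ?_ a
    rintro Y (rfl | rfl | rfl)
    exacts [hcons _ hX, hcons _ (star_mem hX), hcons _ (mul_mem (star_mem hX) hX)]
  · intro hcomm X hX
    exact mul_sum_star_mul_mul_eq_of_commute hTP hP2 (hsupp X hX) (hcomm · X hX)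
end

section
/- Let E be a channel with Kraus operators {E_a} and P a projection on H. The set 𝒜 = {X ∈ L(PH) : [X, E_a P] = 0 and [X†, E_a P] = 0 for all a} is a *-subalgebra of L(PH) that is conserved by E on states in PH, and it contains every *-subalgebra of L(PH) conserved by E on states in PH. -/
open Matrix BigOperators

/-- The commutant (inside `L(PH)`) of the operators `{E_a P, P E_aᴴ}`. -/
def conservedCommutant {n m : ℕ} (E : Fin m → Matrix (Fin n) (Fin n) ℂ)
    (P : Matrix (Fin n) (Fin n) ℂ) : Set (Matrix (Fin n) (Fin n) ℂ) :=
  {X | P * X * P = X ∧ ∀ a, Commute X (E a * P) ∧ Commute Xᴴ (E a * P)}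

private lemma sum_ctms_eq_zero {m n : ℕ}
    (B : Fin m → Matrix (Fin n) (Fin n) ℂ)
    (h : ∑ a, (B a)ᴴ * B a = 0) : ∀ a, B a = 0 := by
  intro a
  ext i j
  have h' : (∑ b, (B b)ᴴ * B b) j j = 0 := by rw [h]; rfl
  simp only [Matrix.sum_apply, Matrix.mul_apply, Matrix.conjTranspose_apply] at h'
  have h'' : ∑ b, ∑ k, ((Complex.normSq (B b k j) : ℝ) : ℂ) = 0 := by
    refine Eq.trans ?_ h'
    refine Finset.sum_congr rfl fun b _ => Finset.sum_congr rfl fun k _ => ?_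
    rw [Complex.normSq_eq_conj_mul_self, Complex.star_def]
  have h3 : ∑ b, (∑ k, Complex.normSq (B b k j)) = 0 := by exact_mod_cast h''
  have hnn : ∀ b ∈ Finset.univ, (0:ℝ) ≤ ∑ k, Complex.normSq (B b k j) :=
    fun b _ => Finset.sum_nonneg fun k _ => Complex.normSq_nonneg _
  have h4 := (Finset.sum_eq_zero_iff_of_nonneg hnn).mp h3 a (Finset.mem_univ a)
  have hnn2 : ∀ k ∈ Finset.univ, (0:ℝ) ≤ Complex.normSq (B a k j) :=
    fun k _ => Complex.normSq_nonneg _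
  have h5 := (Finset.sum_eq_zero_iff_of_nonneg hnn2).mp h4 i (Finset.mem_univ i)
  simpa [Matrix.zero_apply, Complex.normSq_eq_zero] using h5

private lemma commute_of_conserved {n m : ℕ}
    (E : Fin m → Matrix (Fin n) (Fin n) ℂ)
    (hTP : ∑ a, (E a)ᴴ * E a = 1)
    (P : Matrix (Fin n) (Fin n) ℂ) (hP1 : Pᴴ = P) (hP2 : P * P = P)
    (X : Matrix (Fin n) (Fin n) ℂ)
    (hX : P * X * P = X)
    (h1 : P * (∑ a, (E a)ᴴ * X * E a) * P = X)
    (h2 : P * (∑ a, (E a)ᴴ * Xᴴ * E a) * P = Xᴴ)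
    (h3 : P * (∑ a, (E a)ᴴ * (Xᴴ * X) * E a) * P = Xᴴ * X) :
    ∀ a, Commute X (E a * P) := by
  have hPX : P * X = X := by
    conv_lhs => rw [← hX]
    simp only [← mul_assoc, hP2]
    exact hX
  set B : Fin m → Matrix (Fin n) (Fin n) ℂ :=
    fun a => E a * P * X - X * (E a * P) with hB
  have expand : ∑ a, (B a)ᴴ * B a
      = Xᴴ * (P * (∑ a, (E a)ᴴ * E a) * P) * X
        - Xᴴ * (P * (∑ a, (E a)ᴴ * X * E a) * P)
        - (P * (∑ a, (E a)ᴴ * Xᴴ * E a) * P) * X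
        + P * (∑ a, (E a)ᴴ * (Xᴴ * X) * E a) * P := by
    simp only [Finset.mul_sum, Finset.sum_mul]
    rw [← Finset.sum_sub_distrib, ← Finset.sum_sub_distrib, ← Finset.sum_add_distrib]
    refine Finset.sum_congr rfl fun a _ => ?_
    simp only [hB, conjTranspose_sub, conjTranspose_mul, hP1]
    noncomm_ring
  have hsum : ∑ a, (B a)ᴴ * B a = 0 := by
    rw [expand, hTP, h1, h2, h3, mul_one, hP2]
    simp only [mul_assoc, hPX]
    abel
  intro a
  have hBa := sum_ctms_eq_zero B hsum a
  have : E a * P * X = X * (E a * P) := by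
    have := sub_eq_zero.mp hBa
    exact this
  exact this.symm

/-- The set `𝒜 = {X ∈ L(PH) : [X, E_a P] = [Xᴴ, E_a P] = 0 ∀a}` is a *-subalgebra of
`L(PH)`, is conserved by `E` on states in `PH`, and contains every *-subalgebra of
`L(PH)` that is conserved by `E` on states in `PH`. -/
theorem largest_conserved_algebra {n m : ℕ}
    (E : Fin m → Matrix (Fin n) (Fin n) ℂ)
    (hTP : ∑ a, (E a)ᴴ * E a = 1)
    (P : Matrix (Fin n) (Fin n) ℂ) (hP1 : Pᴴ = P) (hP2 : P * P = P) :
    (0 ∈ conservedCommutant E P) ∧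
    (∀ X ∈ conservedCommutant E P, ∀ Y ∈ conservedCommutant E P,
        X + Y ∈ conservedCommutant E P) ∧
    (∀ (c : ℂ), ∀ X ∈ conservedCommutant E P, c • X ∈ conservedCommutant E P) ∧
    (∀ X ∈ conservedCommutant E P, ∀ Y ∈ conservedCommutant E P,
        X * Y ∈ conservedCommutant E P) ∧
    (∀ X ∈ conservedCommutant E P, Xᴴ ∈ conservedCommutant E P) ∧
    (∀ X ∈ conservedCommutant E P,
        P * (∑ a, (E a)ᴴ * X * E a) * P = P * X * P) ∧
    (∀ 𝒮 : NonUnitalStarSubalgebra ℂ (Matrix (Fin n) (Fin n) ℂ),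
        (∀ X ∈ 𝒮, P * X * P = X) →
        (∀ X ∈ 𝒮, P * (∑ a, (E a)ᴴ * X * E a) * P = P * X * P) →
        ∀ X ∈ 𝒮, X ∈ conservedCommutant E P) := by
  have hproj : ∀ X : Matrix (Fin n) (Fin n) ℂ, P * X * P = X →
      P * X = X ∧ X * P = X := by
    intro X hX
    constructor
    · conv_lhs => rw [← hX]
      simp only [← mul_assoc, hP2]
      exact hX
    · conv_lhs => rw [← hX]
      rw [mul_assoc, hP2, hX]
  refine ⟨?_, ?_, ?_, ?_, ?_, ?_, ?_⟩
  · exact ⟨by simp, fun a => ⟨Commute.zero_left _, by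
      simp only [conjTranspose_zero]; exact Commute.zero_left _⟩⟩
  · rintro X ⟨hX, hcX⟩ Y ⟨hY, hcY⟩
    exact ⟨by rw [mul_add, add_mul, hX, hY], fun a =>
      ⟨(hcX a).1.add_left ((hcY a).1), by
        rw [conjTranspose_add]; exact (hcX a).2.add_left ((hcY a).2)⟩⟩
  · rintro c X ⟨hX, hcX⟩
    refine ⟨by rw [mul_smul_comm, smul_mul_assoc, hX], fun a =>
      ⟨(hcX a).1.smul_left c, by
        rw [conjTranspose_smul]; exact (hcX a).2.smul_left _⟩⟩
  · rintro X ⟨hX, hcX⟩ Y ⟨hY, hcY⟩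
    have hXp := hproj X hX
    have hYp := hproj Y hY
    refine ⟨?_, fun a => ⟨(hcX a).1.mul_left ((hcY a).1), ?_⟩⟩
    · calc P * (X * Y) * P = (P * X) * (Y * P) := by noncomm_ring
        _ = X * Y := by rw [hXp.1, hYp.2]
    · rw [conjTranspose_mul]
      exact (hcY a).2.mul_left ((hcX a).2)
  · rintro X ⟨hX, hcX⟩
    refine ⟨?_, fun a => ⟨(hcX a).2, by
      rw [conjTranspose_conjTranspose]; exact (hcX a).1⟩⟩
    conv_rhs => rw [← hX]
    simp only [conjTranspose_mul, hP1, mul_assoc]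
  · rintro X ⟨hX, hcX⟩
    have hXp := hproj X hX
    have step : ∀ a ∈ Finset.univ, P * ((E a)ᴴ * X * E a) * P
        = P * ((E a)ᴴ * E a) * (P * X) := by
      intro a _
      calc P * ((E a)ᴴ * X * E a) * P = P * (E a)ᴴ * (X * (E a * P)) := by
            noncomm_ring
        _ = P * (E a)ᴴ * (E a * P * X) := by rw [(hcX a).1.eq]
        _ = P * ((E a)ᴴ * E a) * (P * X) := by noncomm_ring
    rw [Finset.mul_sum, Finset.sum_mul, Finset.sum_congr rfl step, ← Finset.sum_mul,
      ← Finset.mul_sum, hTP, mul_one, hXp.1]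
    rw [hXp.1]; exact hXp.2.symm
  · intro 𝒮 hS1 hS2 X hXS
    have hXhS : Xᴴ ∈ 𝒮 := star_mem hXS
    have hXhXS : Xᴴ * X ∈ 𝒮 := mul_mem hXhS hXS
    have hXXhS : X * Xᴴ ∈ 𝒮 := mul_mem hXS hXhS
    have hX := hS1 X hXS
    have hXh := hS1 Xᴴ hXhS
    have h1 : P * (∑ a, (E a)ᴴ * X * E a) * P = X := by rw [hS2 X hXS, hX]
    have h2 : P * (∑ a, (E a)ᴴ * Xᴴ * E a) * P = Xᴴ := by rw [hS2 Xᴴ hXhS, hXh]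
    have h3 : P * (∑ a, (E a)ᴴ * (Xᴴ * X) * E a) * P = Xᴴ * X := by
      rw [hS2 _ hXhXS, hS1 _ hXhXS]
    have h3' : P * (∑ a, (E a)ᴴ * (X * Xᴴ) * E a) * P = X * Xᴴ := by
      rw [hS2 _ hXXhS, hS1 _ hXXhS]
    refine ⟨hX, fun a => ⟨commute_of_conserved E hTP P hP1 hP2 X hX h1 h2 h3 a, ?_⟩⟩
    have := commute_of_conserved E hTP P hP1 hP2 Xᴴ hXh h2
      (by rw [conjTranspose_conjTranspose]; exact h1)
      (by rw [conjTranspose_conjTranspose]; exact h3') a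
    exact this
end

section
/- Let 𝒜 be a *-subalgebra of L(H) containing the projection P as an element, and E a channel with Kraus operators {E_a}. Then 𝒜 is conserved by E for states in PH (P E†(X) P = PXP for all X ∈ 𝒜) if and only if [E_a P, X] = 0 for all X ∈ P𝒜P and all a. -/
open Matrix BigOperators
set_option maxHeartbeats 2000000

lemma sum_conjTranspose_mul_self_eq_zero' {m n k : ℕ}
    (B : Fin m → Matrix (Fin n) (Fin k) ℂ)
    (h : ∑ a, (B a)ᴴ * B a = 0) (a : Fin m) : B a = 0 := by
  have key : ∀ i, ∑ b, ∑ j, Complex.normSq (B b j i) = 0 := by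
    intro i
    have h0 := congrFun (congrFun h i) i
    have h1 : ∑ b, ∑ j, star (B b j i) * B b j i = 0 := by
      simpa [Matrix.sum_apply, Matrix.mul_apply, Matrix.conjTranspose_apply] using h0
    have h2 : ((∑ b, ∑ j, Complex.normSq (B b j i) : ℝ) : ℂ) = 0 := by
      push_cast
      rw [← h1]
      refine Finset.sum_congr rfl fun b _ => Finset.sum_congr rfl fun j _ => ?_
      rw [Complex.star_def, Complex.normSq_eq_conj_mul_self]
    exact_mod_cast h2
  ext j i
  have h1 := (Finset.sum_eq_zero_iff_of_nonneg
    (fun b _ => Finset.sum_nonneg fun j _ => Complex.normSq_nonneg _)).mp (key i) a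
    (Finset.mem_univ a)
  have h2 := (Finset.sum_eq_zero_iff_of_nonneg
    (fun j _ => Complex.normSq_nonneg _)).mp h1 j (Finset.mem_univ j)
  simpa using Complex.normSq_eq_zero.mp h2

/-- Let `𝒜` be a *-subalgebra of `L(H)` containing the projection `P`.  Then `𝒜` is
conserved by the channel `E` for states in `PH` (`P E†(X) P = PXP` for all `X ∈ 𝒜`)
if and only if `[E_a P, X] = 0` for all `X ∈ P𝒜P` and all `a`. -/
theorem conserved_iff_commute_of_mem {n m : ℕ}
    (E : Fin m → Matrix (Fin n) (Fin n) ℂ)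
    (hTP : ∑ a, (E a)ᴴ * E a = 1)
    (P : Matrix (Fin n) (Fin n) ℂ) (hP1 : Pᴴ = P) (hP2 : P * P = P)
    (𝒜 : NonUnitalStarSubalgebra ℂ (Matrix (Fin n) (Fin n) ℂ))
    (hPmem : P ∈ 𝒜) :
    (∀ X ∈ 𝒜, P * (∑ a, (E a)ᴴ * X * E a) * P = P * X * P) ↔
      (∀ a, ∀ X ∈ 𝒜, Commute (E a * P) (P * X * P)) := by
  have hsum : ∀ X : Matrix (Fin n) (Fin n) ℂ,
      P * (∑ a, (E a)ᴴ * X * E a) * P = ∑ a, (E a * P)ᴴ * X * (E a * P) := by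
    intro X
    rw [Finset.mul_sum, Finset.sum_mul]
    refine Finset.sum_congr rfl fun a _ => ?_
    simp only [conjTranspose_mul, hP1]
    noncomm_ring
  have hFF : ∑ a, (E a * P)ᴴ * (E a * P) = P := by
    have h0 : ∑ a, (E a * P)ᴴ * (E a * P) = P * (∑ a, (E a)ᴴ * E a) * P := by
      rw [Finset.mul_sum, Finset.sum_mul]
      refine Finset.sum_congr rfl fun a _ => ?_
      simp only [conjTranspose_mul, hP1]
      noncomm_ring
    rw [h0, hTP, mul_one, hP2]
  constructor
  · -- conserved → commute
    intro h a X hX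
    set Y := P * X * P with hY
    have hYmem : Y ∈ 𝒜 := 𝒜.mul_mem (𝒜.mul_mem hPmem hX) hPmem
    have hYs : Yᴴ ∈ 𝒜 := by
      rw [← Matrix.star_eq_conjTranspose]; exact star_mem hYmem
    have hYY : Yᴴ * Y ∈ 𝒜 := 𝒜.mul_mem hYs hYmem
    have hPY : P * Y = Y := by rw [hY, ← mul_assoc, ← mul_assoc, hP2]
    have hYP : Y * P = Y := by rw [hY, mul_assoc (P * X) P P, hP2]
    have hYsP : Yᴴ * P = Yᴴ := by
      rw [← hP1, ← conjTranspose_mul, hPY]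
    have hPYs : P * Yᴴ = Yᴴ := by
      rw [← hP1, ← conjTranspose_mul, hYP]
    have key : ∀ Z ∈ 𝒜, P * Z * P = Z → ∑ b, (E b * P)ᴴ * Z * (E b * P) = Z := by
      intro Z hZ hZP
      have h0 := h Z hZ
      rw [hsum Z] at h0
      rw [h0]
      exact hZP
    have hKY : ∑ b, (E b * P)ᴴ * Y * (E b * P) = Y := by
      refine key Y hYmem ?_
      rw [hPY, hYP]
    have hKYs : ∑ b, (E b * P)ᴴ * Yᴴ * (E b * P) = Yᴴ := by
      refine key Yᴴ hYs ?_
      rw [hPYs, hYsP]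
    have hKYY : ∑ b, (E b * P)ᴴ * (Yᴴ * Y) * (E b * P) = Yᴴ * Y := by
      refine key (Yᴴ * Y) hYY ?_
      rw [← mul_assoc P Yᴴ Y, hPYs, mul_assoc Yᴴ Y P, hYP]
    have hz : ∑ b, ((E b * P) * Y - Y * (E b * P))ᴴ * ((E b * P) * Y - Y * (E b * P)) = 0 := by
      have expand : ∀ b, ((E b * P) * Y - Y * (E b * P))ᴴ * ((E b * P) * Y - Y * (E b * P))
          = Yᴴ * ((E b * P)ᴴ * (E b * P)) * Y - Yᴴ * ((E b * P)ᴴ * Y * (E b * P))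
            - ((E b * P)ᴴ * Yᴴ * (E b * P)) * Y + (E b * P)ᴴ * (Yᴴ * Y) * (E b * P) := by
        intro b
        simp only [conjTranspose_sub, conjTranspose_mul]
        noncomm_ring
      rw [Finset.sum_congr rfl fun b _ => expand b]
      have e1 : ∑ b, Yᴴ * ((E b * P)ᴴ * (E b * P)) * Y = Yᴴ * Y := by
        rw [← Finset.sum_mul, ← Finset.mul_sum, hFF, hYsP]
      have e2 : ∑ b, Yᴴ * ((E b * P)ᴴ * Y * (E b * P)) = Yᴴ * Y := by
        rw [← Finset.mul_sum, hKY]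
      have e3 : ∑ b, ((E b * P)ᴴ * Yᴴ * (E b * P)) * Y = Yᴴ * Y := by
        rw [← Finset.sum_mul, hKYs]
      rw [Finset.sum_add_distrib, Finset.sum_sub_distrib, Finset.sum_sub_distrib,
        e1, e2, e3, hKYY]
      abel
    have hD := sum_conjTranspose_mul_self_eq_zero' _ hz a
    have h4 : (E a * P) * Y = Y * (E a * P) := by
      have h5 : (E a * P) * Y - Y * (E a * P) = 0 := hD
      exact sub_eq_zero.mp h5
    exact h4
  · -- commute → conserved
    intro h X hX
    have hEP : ∀ b, E b * P = P * (E b * P) := by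
      intro b
      have hc := (h b P hPmem).eq
      have hPPP : P * P * P = P := by rw [hP2, hP2]
      rw [hPPP] at hc
      calc E b * P = E b * P * P := by rw [mul_assoc, hP2]
        _ = P * (E b * P) := hc
    rw [hsum X]
    have term : ∀ b, (E b * P)ᴴ * X * (E b * P)
        = (E b * P)ᴴ * (E b * P) * (P * X * P) := by
      intro b
      have h1 : (E b * P)ᴴ * X * (E b * P) = (E b * P)ᴴ * (P * X * P) * (E b * P) := by
        conv_lhs => rw [hEP b]
        simp only [conjTranspose_mul, hP1]
        noncomm_ring
      rw [h1, mul_assoc, ← (h b X hX).eq, ← mul_assoc]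
    rw [Finset.sum_congr rfl fun b _ => term b, ← Finset.sum_mul, hFF]
    calc P * (P * X * P) = (P * P) * X * P := by noncomm_ring
      _ = P * X * P := by rw [hP2]
end

section
/- Let 𝒜 be a *-subalgebra of L(PH) and suppose there exists a channel R whose Kraus operators {R_a} are such that 𝒜 is conserved by R∘E for states in PH (i.e., 𝒜 is correctable for E on PH). Then [P E_a† E_b P, X] = 0 for all X ∈ 𝒜 and all indices a, b. -/
open Matrix BigOperators

-- aux: sum of TᴴT = 0 implies each T = 0
lemma aux_sum_zero {ι : Type*} [Fintype ι] {n : ℕ}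
    (T : ι → Matrix (Fin n) (Fin n) ℂ) (h : ∑ i, (T i)ᴴ * T i = 0) (i : ι) : T i = 0 := by
  ext j k
  have hk := congrArg (fun M : Matrix (Fin n) (Fin n) ℂ => M k k) h
  simp only [Finset.sum_apply, Matrix.sum_apply, Matrix.mul_apply,
    Matrix.conjTranspose_apply, Matrix.zero_apply] at hk
  have hk2 : ∑ i' : ι, ∑ j' : Fin n, (Complex.normSq (T i' j' k) : ℂ) = 0 := by
    rw [← hk]
    refine Finset.sum_congr rfl fun i' _ => Finset.sum_congr rfl fun j' _ => ?_
    rw [Complex.star_def]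
    rw [mul_comm]
    exact (Complex.mul_conj _).symm
  have hk3 : ∑ i' : ι, ∑ j' : Fin n, Complex.normSq (T i' j' k) = 0 := by
    exact_mod_cast hk2
  have h4 := (Finset.sum_eq_zero_iff_of_nonneg (fun i' _ =>
    Finset.sum_nonneg fun j' _ => Complex.normSq_nonneg _)).mp hk3 i (Finset.mem_univ i)
  have h5 := (Finset.sum_eq_zero_iff_of_nonneg (fun j' _ =>
    Complex.normSq_nonneg _)).mp h4 j (Finset.mem_univ j)
  simpa using Complex.normSq_eq_zero.mp h5


/-- If a *-subalgebra `𝒜` of `L(PH)` is correctable for the channel `E` on states in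
`PH` — i.e. there is a channel `R` such that `𝒜` is conserved by `R∘E` on `PH` —
then `[P E_aᴴ E_b P, X] = 0` for all `X ∈ 𝒜` and all `a, b`. -/
theorem correctable_implies_commute {n m r : ℕ}
    (E : Fin m → Matrix (Fin n) (Fin n) ℂ)
    (hE : ∑ a, (E a)ᴴ * E a = 1)
    (R : Fin r → Matrix (Fin n) (Fin n) ℂ)
    (hR : ∑ a, (R a)ᴴ * R a = 1)
    (P : Matrix (Fin n) (Fin n) ℂ) (hP1 : Pᴴ = P) (hP2 : P * P = P)
    (𝒜 : NonUnitalStarSubalgebra ℂ (Matrix (Fin n) (Fin n) ℂ))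
    (hsupp : ∀ X ∈ 𝒜, P * X * P = X)
    (hcorr : ∀ X ∈ 𝒜,
      P * (∑ b, ∑ a, (E b)ᴴ * ((R a)ᴴ * X * R a) * E b) * P = P * X * P) :
    ∀ a b, ∀ X ∈ 𝒜, Commute (P * (E a)ᴴ * E b * P) X := by
  set S : Fin r → Fin m → Matrix (Fin n) (Fin n) ℂ := fun c b => R c * E b * P with hS
  -- PX = X and XP = X for X ∈ 𝒜
  have hPX : ∀ X ∈ 𝒜, P * X = X := by
    intro X hX
    conv_lhs => rw [← hsupp X hX]
    rw [← Matrix.mul_assoc, ← Matrix.mul_assoc, hP2]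
    exact hsupp X hX
  have hXP : ∀ X ∈ 𝒜, X * P = X := by
    intro X hX
    conv_lhs => rw [← hsupp X hX]
    rw [Matrix.mul_assoc, Matrix.mul_assoc, hP2, ← Matrix.mul_assoc]
    exact hsupp X hX
  -- key: ∑ c ∑ b (S c b)ᴴ Y (S c b) = Y for Y ∈ 𝒜
  have key : ∀ Y ∈ 𝒜, ∑ c, ∑ b, (S c b)ᴴ * Y * S c b = Y := by
    intro Y hY
    have expand : ∀ c b, (S c b)ᴴ * Y * S c b
        = P * ((E b)ᴴ * ((R c)ᴴ * Y * R c) * E b) * P := by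
      intro c b
      simp only [hS, Matrix.conjTranspose_mul, hP1, Matrix.mul_assoc]
    calc ∑ c, ∑ b, (S c b)ᴴ * Y * S c b
        = ∑ b, ∑ c, P * ((E b)ᴴ * ((R c)ᴴ * Y * R c) * E b) * P := by
          simp only [expand]; rw [Finset.sum_comm]
      _ = P * (∑ b, ∑ c, (E b)ᴴ * ((R c)ᴴ * Y * R c) * E b) * P := by
          simp only [Finset.mul_sum, Finset.sum_mul]
      _ = Y := by rw [hcorr Y hY, hsupp Y hY]
  -- keyP : ∑ c ∑ b (S c b)ᴴ (S c b) = P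
  have keyP : ∑ c, ∑ b, (S c b)ᴴ * S c b = P := by
    have expand : ∀ c b, (S c b)ᴴ * S c b
        = P * ((E b)ᴴ * (((R c)ᴴ * R c) * E b * P)) := by
      intro c b
      simp only [hS, Matrix.conjTranspose_mul, hP1, Matrix.mul_assoc]
    calc ∑ c, ∑ b, (S c b)ᴴ * S c b
        = ∑ b, P * ((E b)ᴴ * ((∑ c, (R c)ᴴ * R c) * E b * P)) := by
          rw [Finset.sum_comm]
          simp only [expand, Finset.mul_sum, Finset.sum_mul]
      _ = P * ((∑ b, (E b)ᴴ * E b) * P) := by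
          rw [hR]
          simp only [one_mul, Finset.mul_sum, Finset.sum_mul, Matrix.mul_assoc]
      _ = P := by rw [hE, one_mul, hP2]
  -- each S c b commutes with members of 𝒜
  have hcomm : ∀ X ∈ 𝒜, ∀ c b, S c b * X = X * S c b := by
    intro X hX c b
    have hXs : Xᴴ ∈ 𝒜 := star_mem hX
    have hXX : Xᴴ * X ∈ 𝒜 := mul_mem hXs hX
    have hsum : ∑ c, ∑ b,
        (S c b * X - X * S c b)ᴴ * (S c b * X - X * S c b) = 0 := by
      have expand : ∀ c b, (S c b * X - X * S c b)ᴴ * (S c b * X - X * S c b)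
          = Xᴴ * ((S c b)ᴴ * S c b) * X - Xᴴ * ((S c b)ᴴ * X * S c b)
            - ((S c b)ᴴ * Xᴴ * S c b) * X + (S c b)ᴴ * (Xᴴ * X) * S c b := by
        intro c b
        simp only [Matrix.conjTranspose_mul, Matrix.conjTranspose_sub]
        noncomm_ring
      calc ∑ c, ∑ b, (S c b * X - X * S c b)ᴴ * (S c b * X - X * S c b)
          = Xᴴ * (∑ c, ∑ b, (S c b)ᴴ * S c b) * X
            - Xᴴ * (∑ c, ∑ b, (S c b)ᴴ * X * S c b)
            - (∑ c, ∑ b, (S c b)ᴴ * Xᴴ * S c b) * X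
            + ∑ c, ∑ b, (S c b)ᴴ * (Xᴴ * X) * S c b := by
            simp only [expand, Finset.sum_add_distrib, Finset.sum_sub_distrib,
              Finset.mul_sum, Finset.sum_mul]
        _ = Xᴴ * P * X - Xᴴ * X - Xᴴ * X + Xᴴ * X := by
            rw [keyP, key X hX, key Xᴴ hXs, key (Xᴴ * X) hXX]
        _ = 0 := by
            rw [Matrix.mul_assoc, hPX X hX]
            abel
    have := aux_sum_zero (fun p : Fin r × Fin m => S p.1 p.2 * X - X * S p.1 p.2)
      (by rw [Fintype.sum_prod_type]; exact hsum) (c, b)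
    have h0 : S c b * X - X * S c b = 0 := this
    linear_combination (norm := noncomm_ring) h0
  -- conclude
  intro a b X hX
  have hXs : Xᴴ ∈ 𝒜 := star_mem hX
  have hPE : P * (E a)ᴴ * E b * P = ∑ c, (S c a)ᴴ * S c b := by
    symm
    calc ∑ c, (S c a)ᴴ * S c b
        = ∑ c, P * (E a)ᴴ * ((R c)ᴴ * R c) * (E b * P) := by
          refine Finset.sum_congr rfl fun c _ => ?_
          simp only [hS, Matrix.conjTranspose_mul, hP1, Matrix.mul_assoc]
      _ = P * (E a)ᴴ * (∑ c, (R c)ᴴ * R c) * (E b * P) := by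
          simp only [Finset.sum_mul, Finset.mul_sum]
      _ = P * (E a)ᴴ * E b * P := by simp only [hR, Matrix.mul_one, Matrix.mul_assoc]
  have step : ∀ c, (S c a)ᴴ * X = X * (S c a)ᴴ := by
    intro c
    have h := hcomm Xᴴ hXs c a
    have := congrArg Matrix.conjTranspose h
    simpa only [Matrix.conjTranspose_mul, Matrix.conjTranspose_conjTranspose] using this.symm
  show (P * (E a)ᴴ * E b * P) * X = X * (P * (E a)ᴴ * E b * P)
  rw [hPE, Finset.sum_mul, Finset.mul_sum]
  refine Finset.sum_congr rfl fun c _ => ?_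
  rw [Matrix.mul_assoc, hcomm X hX c b, ← Matrix.mul_assoc, step c, Matrix.mul_assoc]
end

section
/- Let E be a channel with Kraus operators {E_a} and P a projection. The set 𝒜 = {X ∈ L(PH) : [X, P E_a† E_b P] = 0 for all a, b} is a *-subalgebra of L(PH), and every *-subalgebra of L(PH) that is correctable for E on states in PH is contained in 𝒜. -/
open Matrix BigOperators

lemma sum_ctms_eq_zero_s9 {N : ℕ} {ι : Type*} [Fintype ι]
    (M : ι → Matrix (Fin N) (Fin N) ℂ) (h : ∑ k, (M k)ᴴ * M k = 0) (k : ι) : M k = 0 := by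
  ext i j
  have h2 : (∑ k, (M k)ᴴ * M k) j j = 0 := by rw [h]; rfl
  simp only [Matrix.sum_apply, Matrix.mul_apply, Matrix.conjTranspose_apply] at h2
  have h3 : ((∑ k, ∑ l, Complex.normSq (M k l j) : ℝ) : ℂ) = 0 := by
    push_cast
    simpa [Complex.normSq_eq_conj_mul_self] using h2
  rw [Complex.ofReal_eq_zero] at h3
  have h4 := (Finset.sum_eq_zero_iff_of_nonneg (fun x _ => Finset.sum_nonneg fun _ _ => Complex.normSq_nonneg _)).mp h3 k (Finset.mem_univ k)
  have h5 := (Finset.sum_eq_zero_iff_of_nonneg (fun x _ => Complex.normSq_nonneg _)).mp h4 i (Finset.mem_univ i)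
  simpa using h5

/-- The commutant (inside `L(PH)`) of the operators `{P E_aᴴ E_b P}`. -/
def correctableCommutant {n m : ℕ} (E : Fin m → Matrix (Fin n) (Fin n) ℂ)
    (P : Matrix (Fin n) (Fin n) ℂ) : Set (Matrix (Fin n) (Fin n) ℂ) :=
  {X | P * X * P = X ∧ ∀ a b, Commute X (P * (E a)ᴴ * E b * P)}

/-- A set `S` of operators is correctable for the channel `E` on states in `PH` if
there exists a channel `R` such that `P (R∘E)†(X) P = PXP` for all `X ∈ S`. -/
def Correctable {n m : ℕ} (E : Fin m → Matrix (Fin n) (Fin n) ℂ)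
    (P : Matrix (Fin n) (Fin n) ℂ) (S : Set (Matrix (Fin n) (Fin n) ℂ)) : Prop :=
  ∃ (r : ℕ) (R : Fin r → Matrix (Fin n) (Fin n) ℂ),
    (∑ a, (R a)ᴴ * R a = 1) ∧
    ∀ X ∈ S, P * (∑ b, ∑ a, (E b)ᴴ * ((R a)ᴴ * X * R a) * E b) * P = P * X * P

/-- The set `𝒜 = {X ∈ L(PH) : [X, P E_aᴴ E_b P] = 0 ∀ a,b}` is a *-subalgebra of
`L(PH)` and contains every *-subalgebra of `L(PH)` that is correctable for `E` on
states in `PH`. -/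
theorem largest_correctable_algebra {n m : ℕ}
    (E : Fin m → Matrix (Fin n) (Fin n) ℂ)
    (hE : ∑ a, (E a)ᴴ * E a = 1)
    (P : Matrix (Fin n) (Fin n) ℂ) (hP1 : Pᴴ = P) (hP2 : P * P = P) :
    (0 ∈ correctableCommutant E P) ∧
    (∀ X ∈ correctableCommutant E P, ∀ Y ∈ correctableCommutant E P,
        X + Y ∈ correctableCommutant E P) ∧
    (∀ (c : ℂ), ∀ X ∈ correctableCommutant E P, c • X ∈ correctableCommutant E P) ∧
    (∀ X ∈ correctableCommutant E P, ∀ Y ∈ correctableCommutant E P,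
        X * Y ∈ correctableCommutant E P) ∧
    (∀ X ∈ correctableCommutant E P, Xᴴ ∈ correctableCommutant E P) ∧
    (∀ 𝒮 : NonUnitalStarSubalgebra ℂ (Matrix (Fin n) (Fin n) ℂ),
        (∀ X ∈ 𝒮, P * X * P = X) → Correctable E P ↑𝒮 →
        ∀ X ∈ 𝒮, X ∈ correctableCommutant E P) := by
  have hPL : ∀ X : Matrix (Fin n) (Fin n) ℂ, P * X * P = X → P * X = X := by
    intro X hX
    conv_lhs => rw [← hX]
    rw [← mul_assoc, ← mul_assoc, hP2, hX]
  have hPR : ∀ X : Matrix (Fin n) (Fin n) ℂ, P * X * P = X → X * P = X := by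
    intro X hX
    conv_lhs => rw [← hX]
    rw [mul_assoc, hP2, hX]
  refine ⟨⟨by simp, fun a b => Commute.zero_left _⟩, ?_, ?_, ?_, ?_, ?_⟩
  · rintro X ⟨hX1, hX2⟩ Y ⟨hY1, hY2⟩
    exact ⟨by rw [mul_add, add_mul, hX1, hY1], fun a b => (hX2 a b).add_left (hY2 a b)⟩
  · rintro c X ⟨hX1, hX2⟩
    exact ⟨by rw [mul_smul_comm, smul_mul_assoc, hX1], fun a b => (hX2 a b).smul_left c⟩
  · rintro X ⟨hX1, hX2⟩ Y ⟨hY1, hY2⟩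
    refine ⟨?_, fun a b => (hX2 a b).mul_left (hY2 a b)⟩
    rw [← mul_assoc, mul_assoc P X Y, ← mul_assoc P X, hPL X hX1, mul_assoc, hPR Y hY1]
  · rintro X ⟨hX1, hX2⟩
    refine ⟨?_, fun a b => ?_⟩
    · calc P * Xᴴ * P = (P * X * P)ᴴ := by simp [conjTranspose_mul, hP1, mul_assoc]
        _ = Xᴴ := by rw [hX1]
    · have hK : (P * (E b)ᴴ * E a * P)ᴴ = P * (E a)ᴴ * E b * P := by
        simp [conjTranspose_mul, hP1, mul_assoc]
      have h2 : Commute (star X) (star (P * (E b)ᴴ * E a * P)) := (hX2 b a).star_star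
      simpa [Matrix.star_eq_conjTranspose, hK] using h2
  · rintro 𝒮 hS ⟨r, R, hR, hcorr⟩ X hX
    -- key fixed-point identity
    have key : ∀ Y ∈ 𝒮, ∑ b, ∑ a, (R a * E b * P)ᴴ * Y * (R a * E b * P) = Y := by
      intro Y hY
      have h1 := hcorr Y hY
      rw [hS Y hY] at h1
      calc ∑ b, ∑ a, (R a * E b * P)ᴴ * Y * (R a * E b * P)
          = P * (∑ b, ∑ a, (E b)ᴴ * ((R a)ᴴ * Y * R a) * E b) * P := by
            simp only [Finset.mul_sum, Finset.sum_mul, conjTranspose_mul, hP1, mul_assoc]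
        _ = Y := h1
    have hAP : ∑ b, ∑ a, (R a * E b * P)ᴴ * (R a * E b * P) = P := by
      have step : ∀ b, ∑ a, (R a * E b * P)ᴴ * (R a * E b * P) = P * ((E b)ᴴ * (E b * P)) := by
        intro b
        calc ∑ a, (R a * E b * P)ᴴ * (R a * E b * P)
            = P * ((E b)ᴴ * ((∑ a, (R a)ᴴ * R a) * (E b * P))) := by
              simp only [Finset.mul_sum, Finset.sum_mul, conjTranspose_mul, hP1, mul_assoc]
          _ = P * ((E b)ᴴ * (E b * P)) := by rw [hR, one_mul]
      calc ∑ b, ∑ a, (R a * E b * P)ᴴ * (R a * E b * P)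
          = ∑ b, P * ((E b)ᴴ * (E b * P)) := Finset.sum_congr rfl fun b _ => step b
        _ = P * ((∑ b, (E b)ᴴ * E b) * P) := by
            simp only [Finset.mul_sum, Finset.sum_mul, mul_assoc]
        _ = P := by rw [hE, one_mul, hP2]
    -- every element of 𝒮 commutes with each R a * E b * P
    have main : ∀ Y ∈ 𝒮, ∀ b a, Y * (R a * E b * P) = (R a * E b * P) * Y := by
      intro Y hY b a
      have hY1 : P * Y * P = Y := hS Y hY
      have hYs : Yᴴ ∈ 𝒮 := by
        have := star_mem (s := 𝒮) hY
        simpa [Matrix.star_eq_conjTranspose] using this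
      have hYsY : Yᴴ * Y ∈ 𝒮 := mul_mem hYs hY
      have hYsP : Yᴴ * P = Yᴴ := by
        have := congrArg conjTranspose (hPL Y hY1)
        simpa [conjTranspose_mul, hP1] using this
      set M : Fin m × Fin r → Matrix (Fin n) (Fin n) ℂ :=
        fun p => Y * (R p.2 * E p.1 * P) - (R p.2 * E p.1 * P) * Y with hM
      have hzero : ∑ p : Fin m × Fin r, (M p)ᴴ * M p = 0 := by
        have e : ∀ p : Fin m × Fin r, (M p)ᴴ * M p =
            (R p.2 * E p.1 * P)ᴴ * (Yᴴ * Y) * (R p.2 * E p.1 * P)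
            - ((R p.2 * E p.1 * P)ᴴ * Yᴴ * (R p.2 * E p.1 * P)) * Y
            - Yᴴ * ((R p.2 * E p.1 * P)ᴴ * Y * (R p.2 * E p.1 * P))
            + Yᴴ * ((R p.2 * E p.1 * P)ᴴ * (R p.2 * E p.1 * P)) * Y := by
          intro p
          simp only [hM, conjTranspose_sub, conjTranspose_mul]
          noncomm_ring
        calc ∑ p : Fin m × Fin r, (M p)ᴴ * M p
            = (∑ p : Fin m × Fin r, (R p.2 * E p.1 * P)ᴴ * (Yᴴ * Y) * (R p.2 * E p.1 * P))
              - (∑ p : Fin m × Fin r, (R p.2 * E p.1 * P)ᴴ * Yᴴ * (R p.2 * E p.1 * P)) * Y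
              - Yᴴ * (∑ p : Fin m × Fin r, (R p.2 * E p.1 * P)ᴴ * Y * (R p.2 * E p.1 * P))
              + Yᴴ * (∑ p : Fin m × Fin r, (R p.2 * E p.1 * P)ᴴ * (R p.2 * E p.1 * P)) * Y := by
              simp only [e, Finset.sum_sub_distrib, Finset.sum_add_distrib,
                Finset.sum_mul, Finset.mul_sum]
          _ = Yᴴ * Y - Yᴴ * Y - Yᴴ * Y + Yᴴ * P * Y := by
              rw [Fintype.sum_prod_type, Fintype.sum_prod_type, Fintype.sum_prod_type,
                Fintype.sum_prod_type, key (Yᴴ * Y) hYsY, key Yᴴ hYs, key Y hY, hAP]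
          _ = 0 := by
              rw [mul_assoc Yᴴ P Y, hPL Y hY1]
              abel
      have := sum_ctms_eq_zero_s9 M hzero (b, a)
      rw [hM] at this
      exact sub_eq_zero.mp this
    have hcX : ∀ b a, X * (R a * E b * P) = (R a * E b * P) * X := main X hX
    have hXs : Xᴴ ∈ 𝒮 := by
      have := star_mem (s := 𝒮) hX
      simpa [Matrix.star_eq_conjTranspose] using this
    have hcXs : ∀ b a, (R a * E b * P)ᴴ * X = X * (R a * E b * P)ᴴ := by
      intro b a
      have := congrArg conjTranspose (main Xᴴ hXs b a)
      simpa [conjTranspose_mul, conjTranspose_conjTranspose, mul_assoc] using this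
    refine ⟨hS X hX, fun a b => ?_⟩
    have hdecomp : P * (E a)ᴴ * E b * P = ∑ c, (R c * E a * P)ᴴ * (R c * E b * P) := by
      calc P * (E a)ᴴ * E b * P
          = P * ((E a)ᴴ * ((∑ c, (R c)ᴴ * R c) * (E b * P))) := by
            rw [hR, one_mul, mul_assoc, mul_assoc]
        _ = ∑ c, (R c * E a * P)ᴴ * (R c * E b * P) := by
            simp only [Finset.mul_sum, Finset.sum_mul, conjTranspose_mul, hP1, mul_assoc]
    rw [hdecomp]
    apply Commute.sum_right
    intro c _
    have c1 : Commute X (R c * E a * P)ᴴ := (hcXs a c).symm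
    have c2 : Commute X (R c * E b * P) := hcX b c
    exact c1.mul_right c2
end

section
/- Let V: H_S → H_S⊗H_A be an isometry, C = Σ_i c_i P_i a self-adjoint operator with orthogonal spectral projections P_i summing to 1, and suppose there exist POVMs {X_i} on H_S and {Y_i} on H_A (X_i, Y_i ≥ 0, Σ_i X_i = 1, Σ_i Y_i = 1) with V†(X_i⊗1)V = P_i and V†(1⊗Y_i)V = P_i for all i. Then V†(X_i ⊗ Y_j)V = δ_{ij} P_i, and hence for every density operator ρ on H_S, Tr(VρV† (X_i⊗Y_j)) = δ_{ij} Tr(ρ P_i). -/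
/-!
Compressing the POVM `1 ⊗ Y` by `V` yields the projection-valued measure `P`, and positivity
upgrades this to the intertwining relation `(1 ⊗ Y j) V = V P j`: for `k ≠ j` the block
`M = V P j` satisfies `Mᴴ (1 ⊗ Y k) M = P j P k P j = 0`, so `(1 ⊗ Y k) M = 0`, and the two
resolutions of the identity `∑ P = 1`, `∑ (1 ⊗ Y) = 1` leave only the diagonal block.
Then `V†(X i ⊗ Y j)V = V†(X i ⊗ 1)V P j = P i P j = δ_ij P i`, and the statement about `ρ`
follows by cyclicity of the trace.
-/

open Matrix Kronecker
open scoped ComplexOrder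

namespace Matrix

section Kronecker

variable {R l m n p : Type*} [CommSemiring R]

theorem kronecker_sum {ι : Type*} [Fintype ι] (A : Matrix l m R) (B : ι → Matrix n p R) :
    A ⊗ₖ ∑ i, B i = ∑ i, A ⊗ₖ B i :=
  map_sum (kroneckerBilinear (R := R) A) B Finset.univ

theorem kronecker_eq_kronecker_one_mul_one_kronecker [Fintype m] [Fintype n] [DecidableEq m]
    [DecidableEq n] (A : Matrix l m R) (B : Matrix n p R) :
    A ⊗ₖ B = (A ⊗ₖ (1 : Matrix n n R)) * ((1 : Matrix m m R) ⊗ₖ B) := by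
  rw [← mul_kronecker_mul, Matrix.mul_one, Matrix.one_mul]

end Kronecker

variable {𝕜 ι m n : Type*} [RCLike 𝕜] [Fintype m]

open scoped MatrixOrder in
theorem PosSemidef.mul_eq_zero_of_conjTranspose_mul_mul_eq_zero {Z : Matrix m m 𝕜}
    (hZ : Z.PosSemidef) {M : Matrix m n 𝕜} (h : Mᴴ * Z * M = 0) : Z * M = 0 := by
  classical
  obtain ⟨B, rfl⟩ := CStarAlgebra.nonneg_iff_eq_star_mul_self.mp hZ.nonneg
  rw [star_eq_conjTranspose] at h ⊢
  have hBM : B * M = 0 := by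
    rw [← conjTranspose_mul_self_eq_zero, conjTranspose_mul, ← h]
    simp only [Matrix.mul_assoc]
  rw [Matrix.mul_assoc, hBM, Matrix.mul_zero]

theorem mul_eq_mul_of_conjTranspose_mul_mul_eq [Fintype ι] [DecidableEq ι] [Fintype n]
    [DecidableEq m] [DecidableEq n] {Z : ι → Matrix m m 𝕜} {Q : ι → Matrix n n 𝕜}
    {W : Matrix m n 𝕜} (hZ : ∀ i, (Z i).PosSemidef) (hZsum : ∑ i, Z i = 1)
    (hQ : ∀ i, (Q i)ᴴ = Q i) (hQorth : ∀ i j, i ≠ j → Q i * Q j = 0)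
    (hQsum : ∑ i, Q i = 1) (hZQ : ∀ i, Wᴴ * Z i * W = Q i) (i : ι) : Z i * W = W * Q i := by
  have hoff : ∀ k j, k ≠ j → Z k * W * Q j = 0 := fun k j hkj => by
    rw [Matrix.mul_assoc]
    refine (hZ k).mul_eq_zero_of_conjTranspose_mul_mul_eq_zero ?_
    calc (W * Q j)ᴴ * Z k * (W * Q j) = Q j * (Wᴴ * Z k * W) * Q j := by
          simp only [conjTranspose_mul, hQ, Matrix.mul_assoc]
      _ = 0 := by rw [hZQ, hQorth j k hkj.symm, Matrix.zero_mul]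
  calc Z i * W = ∑ k, Z i * W * Q k := by rw [← Matrix.mul_sum, hQsum, Matrix.mul_one]
    _ = Z i * W * Q i := Finset.sum_eq_single i (fun k _ hki => hoff i k hki.symm) (by simp)
    _ = ∑ k, Z k * W * Q i :=
      (Finset.sum_eq_single i (fun k _ hki => hoff k i hki) (by simp)).symm
    _ = W * Q i := by rw [← Matrix.sum_mul, ← Matrix.sum_mul, hZsum, Matrix.one_mul]

end Matrix

theorem duplicated_observables_correlated_general {nS nA p : ℕ}
    (V : Matrix (Fin nS × Fin nA) (Fin nS) ℂ)
    (P : Fin p → Matrix (Fin nS) (Fin nS) ℂ)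
    (hPsa : ∀ i, (P i)ᴴ = P i)
    (hPidem : ∀ i, P i * P i = P i)
    (hPorth : ∀ i j, i ≠ j → P i * P j = 0)
    (hPsum : ∑ i, P i = 1)
    (X : Fin p → Matrix (Fin nS) (Fin nS) ℂ)
    (Y : Fin p → Matrix (Fin nA) (Fin nA) ℂ)
    (hYpos : ∀ i, (Y i).PosSemidef) (hYsum : ∑ i, Y i = 1)
    (hX : ∀ i, Vᴴ * (X i ⊗ₖ (1 : Matrix (Fin nA) (Fin nA) ℂ)) * V = P i)
    (hY : ∀ i, Vᴴ * ((1 : Matrix (Fin nS) (Fin nS) ℂ) ⊗ₖ Y i) * V = P i) :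
    (∀ i j, Vᴴ * (X i ⊗ₖ Y j) * V = if i = j then P i else 0) ∧
    (∀ (ρ : Matrix (Fin nS) (Fin nS) ℂ), ρ.PosSemidef → ρ.trace = 1 →
      ∀ i j, (V * ρ * Vᴴ * (X i ⊗ₖ Y j)).trace =
        if i = j then (ρ * P i).trace else 0) := by
  have hYV : ∀ j, ((1 : Matrix (Fin nS) (Fin nS) ℂ) ⊗ₖ Y j) * V = V * P j :=
    mul_eq_mul_of_conjTranspose_mul_mul_eq (fun j => PosSemidef.one.kronecker (hYpos j))
      (by rw [← kronecker_sum, hYsum, one_kronecker_one]) hPsa hPorth hPsum hY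
  have hXY : ∀ i j, Vᴴ * (X i ⊗ₖ Y j) * V = if i = j then P i else 0 := fun i j => by
    calc Vᴴ * (X i ⊗ₖ Y j) * V
        = Vᴴ * (X i ⊗ₖ (1 : Matrix (Fin nA) (Fin nA) ℂ)) * V * P j := by
          rw [kronecker_eq_kronecker_one_mul_one_kronecker, Matrix.mul_assoc Vᴴ, Matrix.mul_assoc,
            hYV, ← Matrix.mul_assoc, ← Matrix.mul_assoc]
      _ = if i = j then P i else 0 := by
          rw [hX]
          split_ifs with hij
          · rw [hij, hPidem]
          · exact hPorth i j hij
  refine ⟨hXY, fun ρ _ _ i j => ?_⟩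
  have hcycle :
      (V * ρ * Vᴴ * (X i ⊗ₖ Y j)).trace = (ρ * (Vᴴ * (X i ⊗ₖ Y j) * V)).trace := by
    rw [Matrix.mul_assoc, Matrix.mul_assoc, trace_mul_comm]
    simp only [Matrix.mul_assoc]
  rw [hcycle, hXY]
  split_ifs <;> simp

/-- Let `V : H_S → H_S ⊗ H_A` be an isometry, `{P_i}` mutually orthogonal spectral
projections (of a self-adjoint `C = Σ_i c_i P_i`) summing to `1`, and `{X_i}`,
`{Y_i}` POVMs on `H_S` and `H_A` with `V†(X_i ⊗ 1)V = P_i` and `V†(1 ⊗ Y_i)V = P_i`.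
Then `V†(X_i ⊗ Y_j)V = δ_{ij} P_i`, and hence for every density operator `ρ` on
`H_S`, `Tr(VρV† (X_i ⊗ Y_j)) = δ_{ij} Tr(ρ P_i)`. -/
theorem duplicated_observables_correlated {nS nA p : ℕ}
    (V : Matrix (Fin nS × Fin nA) (Fin nS) ℂ)
    (hViso : Vᴴ * V = 1)
    (c : Fin p → ℝ)
    (P : Fin p → Matrix (Fin nS) (Fin nS) ℂ)
    (hPsa : ∀ i, (P i)ᴴ = P i)
    (hPidem : ∀ i, P i * P i = P i)
    (hPorth : ∀ i j, i ≠ j → P i * P j = 0)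
    (hPsum : ∑ i, P i = 1)
    (X : Fin p → Matrix (Fin nS) (Fin nS) ℂ)
    (hXpos : ∀ i, (X i).PosSemidef) (hXsum : ∑ i, X i = 1)
    (Y : Fin p → Matrix (Fin nA) (Fin nA) ℂ)
    (hYpos : ∀ i, (Y i).PosSemidef) (hYsum : ∑ i, Y i = 1)
    (hX : ∀ i, Vᴴ * (X i ⊗ₖ (1 : Matrix (Fin nA) (Fin nA) ℂ)) * V = P i)
    (hY : ∀ i, Vᴴ * ((1 : Matrix (Fin nS) (Fin nS) ℂ) ⊗ₖ Y i) * V = P i) :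
    (∀ i j, Vᴴ * (X i ⊗ₖ Y j) * V = if i = j then P i else 0) ∧
    (∀ (ρ : Matrix (Fin nS) (Fin nS) ℂ), ρ.PosSemidef → ρ.trace = 1 →
      ∀ i j, (V * ρ * Vᴴ * (X i ⊗ₖ Y j)).trace =
        if i = j then (ρ * P i).trace else 0) :=
  duplicated_observables_correlated_general V P hPsa hPidem hPorth hPsum X Y hYpos hYsum hX hY
end

section
/- Suppose R is a channel with R†(X) = R†(PXP) for all X, and that R corrects E on the algebra 𝒜 ⊆ L(PH): P E†(R†(X)) P = PXP for all X ∈ 𝒜 (where X = PXP). Define 𝒱 = E†(R†(𝒜)). Then 𝒱 is an operator system (a self-adjoint linear subspace containing E†(R†(P))), and every X ∈ 𝒱 satisfies E†(R†(X)) = X; in particular, the elements of 𝒱 are exactly corrected by R∘E independently of the initial state. -/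
open Matrix BigOperators

/-- The dual (Heisenberg picture) of the channel with Kraus operators `K`:
`X ↦ Σ_a K_aᴴ X K_a`. -/
noncomputable def dualChannel {n : ℕ} {ι : Type*} [Fintype ι]
    (K : ι → Matrix (Fin n) (Fin n) ℂ) (X : Matrix (Fin n) (Fin n) ℂ) :
    Matrix (Fin n) (Fin n) ℂ :=
  ∑ a, (K a)ᴴ * X * K a

lemma dualChannel_add {n : ℕ} {ι : Type*} [Fintype ι]
    (K : ι → Matrix (Fin n) (Fin n) ℂ) (X Y : Matrix (Fin n) (Fin n) ℂ) :
    dualChannel K (X + Y) = dualChannel K X + dualChannel K Y := by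
  simp [dualChannel, mul_add, add_mul, Finset.sum_add_distrib]

lemma dualChannel_smul {n : ℕ} {ι : Type*} [Fintype ι]
    (K : ι → Matrix (Fin n) (Fin n) ℂ) (c : ℂ) (X : Matrix (Fin n) (Fin n) ℂ) :
    dualChannel K (c • X) = c • dualChannel K X := by
  simp [dualChannel, Matrix.mul_smul, Matrix.smul_mul, Finset.smul_sum]

lemma dualChannel_conjTranspose {n : ℕ} {ι : Type*} [Fintype ι]
    (K : ι → Matrix (Fin n) (Fin n) ℂ) (X : Matrix (Fin n) (Fin n) ℂ) :
    (dualChannel K X)ᴴ = dualChannel K Xᴴ := by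
  simp [dualChannel, conjTranspose_sum, conjTranspose_mul, mul_assoc]

/-- Suppose the correction channel `R` satisfies `R†(X) = R†(PXP)` for all `X` and
corrects `E` on the *-subalgebra `𝒜 ⊆ L(PH)` containing `P`:
`P E†(R†(X)) P = PXP = X` for `X ∈ 𝒜`.  Then `𝒱 = E†(R†(𝒜))` is an operator system
(a self-adjoint subspace containing `E†(R†(P))`), and every `X ∈ 𝒱` satisfies
`E†(R†(X)) = X`: the elements of `𝒱` are exactly corrected, independently of the
initial state. -/
theorem operator_system_exactly_corrected {n m r : ℕ}
    (E : Fin m → Matrix (Fin n) (Fin n) ℂ) (hE : ∑ a, (E a)ᴴ * E a = 1)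
    (R : Fin r → Matrix (Fin n) (Fin n) ℂ) (hR : ∑ a, (R a)ᴴ * R a = 1)
    (P : Matrix (Fin n) (Fin n) ℂ) (hP1 : Pᴴ = P) (hP2 : P * P = P)
    (𝒜 : NonUnitalStarSubalgebra ℂ (Matrix (Fin n) (Fin n) ℂ))
    (hsupp : ∀ X ∈ 𝒜, P * X * P = X)
    (hPmem : P ∈ 𝒜)
    (hRfix : ∀ X, dualChannel R X = dualChannel R (P * X * P))
    (hcorr : ∀ X ∈ 𝒜, P * dualChannel E (dualChannel R X) * P = P * X * P) :
    (dualChannel E (dualChannel R P) ∈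
        {Z | ∃ Y ∈ 𝒜, Z = dualChannel E (dualChannel R Y)}) ∧
    (∀ Z₁ ∈ {Z | ∃ Y ∈ 𝒜, Z = dualChannel E (dualChannel R Y)},
      ∀ Z₂ ∈ {Z | ∃ Y ∈ 𝒜, Z = dualChannel E (dualChannel R Y)},
        Z₁ + Z₂ ∈ {Z | ∃ Y ∈ 𝒜, Z = dualChannel E (dualChannel R Y)}) ∧
    (∀ (c : ℂ), ∀ Z₁ ∈ {Z | ∃ Y ∈ 𝒜, Z = dualChannel E (dualChannel R Y)},
        c • Z₁ ∈ {Z | ∃ Y ∈ 𝒜, Z = dualChannel E (dualChannel R Y)}) ∧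
    (∀ Z₁ ∈ {Z | ∃ Y ∈ 𝒜, Z = dualChannel E (dualChannel R Y)},
        Z₁ᴴ ∈ {Z | ∃ Y ∈ 𝒜, Z = dualChannel E (dualChannel R Y)}) ∧
    (∀ Z₁ ∈ {Z | ∃ Y ∈ 𝒜, Z = dualChannel E (dualChannel R Y)},
        dualChannel E (dualChannel R Z₁) = Z₁) := by
  constructor
  · exact ⟨P, hPmem, rfl⟩
  refine ⟨?_, ?_, ?_, ?_⟩
  · rintro Z₁ ⟨Y₁, hY₁, rfl⟩ Z₂ ⟨Y₂, hY₂, rfl⟩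
    exact ⟨Y₁ + Y₂, add_mem hY₁ hY₂, by rw [dualChannel_add, dualChannel_add]⟩
  · rintro c Z₁ ⟨Y₁, hY₁, rfl⟩
    exact ⟨c • Y₁, SMulMemClass.smul_mem c hY₁,
      by rw [dualChannel_smul, dualChannel_smul]⟩
  · rintro Z₁ ⟨Y₁, hY₁, rfl⟩
    refine ⟨Y₁ᴴ, star_mem hY₁, ?_⟩
    rw [dualChannel_conjTranspose, dualChannel_conjTranspose]
  · rintro Z₁ ⟨Y₁, hY₁, rfl⟩
    have key : P * dualChannel E (dualChannel R Y₁) * P = Y₁ := by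
      rw [hcorr Y₁ hY₁, hsupp Y₁ hY₁]
    calc dualChannel E (dualChannel R (dualChannel E (dualChannel R Y₁)))
        = dualChannel E (dualChannel R (P * dualChannel E (dualChannel R Y₁) * P)) := by
          rw [← hRfix]
      _ = dualChannel E (dualChannel R Y₁) := by rw [key]
end
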